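/- arXiv:1611.09112 — 3 statements merged into one kernel-verified Lean document; each statement's English description precedes it below -/
import Mathlib

section
/- Let U ⊆ ℝ^m be open, let Y : U → ℝ^m be a smooth vector field, let B : U → ℂ^m be smooth, and let α : U → Hom_ℂ(ℂ^m, ℂ) be a smooth field of ℂ-linear functionals such that α(x)(B(x)) = 0 for all x ∈ U. Let p ∈ U, ε > 0, let U₀ ⊆ U be open with p ∈ U₀, and let K : (−ε, ε) × U₀ → U be a smooth map satisfying K(0, x) = x for all x ∈ U₀ and (∂K/∂τ)(τ, x) = Y(K(τ, x)) for all (τ, x) (i.e. K is a local flow of Y). Then the function τ ↦ α(K(τ, p))( (D_x K)(τ, p)(B(p)) ) is differentiable at τ = 0 and its derivative there equals α(p)( DY(p)(B(p)) − DB(p)(Y(p)) ), i.e. it equals α(p)([B, Y](p)). -/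
set_option maxHeartbeats 1000000


/-- The complex-linear extension of a real-linear map `A : ℝ^m → ℝ^m`, acting on `ℂ^m`. -/
noncomputable def extC {m : ℕ} (A : (Fin m → ℝ) →L[ℝ] (Fin m → ℝ)) (w : Fin m → ℂ) :
    Fin m → ℂ :=
  fun i => ((A (fun j => (w j).re)) i : ℂ) + Complex.I * ((A (fun j => (w j).im)) i : ℂ)

lemma extC_id {m : ℕ} (w : Fin m → ℂ) : extC (ContinuousLinearMap.id ℝ _) w = w := by
  funext i
  simp only [extC, ContinuousLinearMap.coe_id', id_eq]
  apply Complex.ext <;> simp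

lemma hasDerivAt_extC {m : ℕ} {A : ℝ → ((Fin m → ℝ) →L[ℝ] (Fin m → ℝ))}
    {L : (Fin m → ℝ) →L[ℝ] (Fin m → ℝ)} (hA : HasDerivAt A L 0) (w : Fin m → ℂ) :
    HasDerivAt (fun τ => extC (A τ) w) (extC L w) 0 := by
  rw [hasDerivAt_pi]
  intro i
  have key : ∀ u : Fin m → ℝ,
      HasDerivAt (fun τ => ((A τ u) i : ℂ)) (((L u) i : ℂ)) 0 := by
    intro u
    set Ψ : ((Fin m → ℝ) →L[ℝ] (Fin m → ℝ)) →L[ℝ] ℝ :=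
      (ContinuousLinearMap.proj i).comp (ContinuousLinearMap.apply ℝ (Fin m → ℝ) u) with hΨ
    have h1 : HasDerivAt (fun τ => (A τ u) i) ((L u) i) 0 := by
      have := Ψ.hasFDerivAt.comp_hasDerivAt 0 hA
      exact this
    exact h1.ofReal_comp
  exact ((key _).add ((key _).const_mul Complex.I))

/-- Derivative of `τ ↦ α(K(τ,p))((D_x K)(τ,p)(B(p)))` at `τ = 0` along the local flow `K`
of the vector field `Y`: it equals `α(p)([B,Y](p)) = α(p)(DY(p)B(p) - DB(p)Y(p))`. -/
theorem stmt_7 {m : ℕ} (U : Set (Fin m → ℝ)) (hU : IsOpen U)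
    (Y : (Fin m → ℝ) → (Fin m → ℝ)) (hY : ContDiffOn ℝ (⊤ : ℕ∞) Y U)
    (B : (Fin m → ℝ) → (Fin m → ℂ)) (hB : ContDiffOn ℝ (⊤ : ℕ∞) B U)
    (α : (Fin m → ℝ) → ((Fin m → ℂ) →L[ℂ] ℂ)) (hα : ContDiffOn ℝ (⊤ : ℕ∞) α U)
    (hαB : ∀ x ∈ U, α x (B x) = 0)
    (p : Fin m → ℝ) (hp : p ∈ U) (ε : ℝ) (hε : 0 < ε)
    (U₀ : Set (Fin m → ℝ)) (hU₀ : IsOpen U₀) (hpU₀ : p ∈ U₀) (hU₀U : U₀ ⊆ U)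
    (K : ℝ → (Fin m → ℝ) → (Fin m → ℝ))
    (hKsm : ContDiffOn ℝ (⊤ : ℕ∞) (fun q : ℝ × (Fin m → ℝ) => K q.1 q.2)
      (Set.Ioo (-ε) ε ×ˢ U₀))
    (hKmem : ∀ τ ∈ Set.Ioo (-ε) ε, ∀ x ∈ U₀, K τ x ∈ U)
    (hK0 : ∀ x ∈ U₀, K 0 x = x)
    (hKflow : ∀ τ ∈ Set.Ioo (-ε) ε, ∀ x ∈ U₀,
      HasDerivAt (fun t => K t x) (Y (K τ x)) τ) :
    HasDerivAt (fun τ => α (K τ p) (extC (fderiv ℝ (K τ) p) (B p)))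
      (α p (extC (fderiv ℝ Y p) (B p) - (fderiv ℝ B p) (Y p))) 0 := by
  classical
  set F : ℝ × (Fin m → ℝ) → (Fin m → ℝ) := fun q => K q.1 q.2 with hFdef
  have h0ε : (0:ℝ) ∈ Set.Ioo (-ε) ε := ⟨neg_lt_zero.2 hε, hε⟩
  have hS : IsOpen (Set.Ioo (-ε) ε ×ˢ U₀) := isOpen_Ioo.prod hU₀
  have h0p : ((0:ℝ), p) ∈ Set.Ioo (-ε) ε ×ˢ U₀ := ⟨h0ε, hpU₀⟩
  -- smoothness of F at points of S
  have hFq : ∀ q ∈ Set.Ioo (-ε) ε ×ˢ U₀, ContDiffAt ℝ (⊤ : ℕ∞) F q := fun q hq =>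
    hKsm.contDiffAt (hS.mem_nhds hq)
  have hFdiff : ∀ q ∈ Set.Ioo (-ε) ε ×ˢ U₀, DifferentiableAt ℝ F q := fun q hq =>
    (hFq q hq).differentiableAt (by simp)
  -- Step A : fderiv of K τ at p
  have hA : ∀ τ ∈ Set.Ioo (-ε) ε,
      fderiv ℝ (K τ) p
        = (fderiv ℝ F (τ, p)).comp (ContinuousLinearMap.inr ℝ ℝ (Fin m → ℝ)) := by
    intro τ hτ
    have hd : HasFDerivAt F (fderiv ℝ F (τ, p)) (τ, p) :=
      (hFdiff (τ, p) ⟨hτ, hpU₀⟩).hasFDerivAt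
    have : HasFDerivAt (fun x : (Fin m → ℝ) => F (τ, x))
        ((fderiv ℝ F (τ, p)).comp (ContinuousLinearMap.inr ℝ ℝ (Fin m → ℝ))) p :=
      hd.comp p (hasFDerivAt_prodMk_right τ p)
    exact this.fderiv
  -- K 0 = id near p
  have hK0ev : (K 0) =ᶠ[nhds p] id :=
    Filter.eventuallyEq_of_mem (hU₀.mem_nhds hpU₀) (fun x hx => hK0 x hx)
  have hfK0 : fderiv ℝ (K 0) p = ContinuousLinearMap.id ℝ (Fin m → ℝ) := by
    rw [hK0ev.fderiv_eq, fderiv_id]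
  -- F differentiable at (0,p); its fderiv restricted to space directions is id
  have hDF0 : (fderiv ℝ F (0, p)).comp (ContinuousLinearMap.inr ℝ ℝ (Fin m → ℝ))
      = ContinuousLinearMap.id ℝ (Fin m → ℝ) := by
    rw [← hA 0 h0ε, hfK0]
  -- time derivative of F equals Y ∘ F on S
  have hFt : ∀ q ∈ Set.Ioo (-ε) ε ×ˢ U₀, fderiv ℝ F q (1, 0) = Y (F q) := by
    intro q hq
    have hd : HasDerivAt (fun t => F (t, q.2)) (fderiv ℝ F q (1, 0)) q.1 := by
      have h1 : HasDerivAt (fun t : ℝ => (t, q.2)) ((1:ℝ), (0:(Fin m → ℝ))) q.1 :=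
        (hasDerivAt_id q.1).prodMk (hasDerivAt_const q.1 q.2)
      exact (hFdiff q hq).hasFDerivAt.comp_hasDerivAt q.1 h1
    exact hd.unique (hKflow q.1 hq.1 q.2 hq.2)
  -- second derivative
  set f'' := fderiv ℝ (fderiv ℝ F) (0, p) with hf''
  have hFC2 : ContDiffAt ℝ 2 F (0, p) := (hFq _ h0p).of_le (WithTop.coe_le_coe.mpr le_top)
  have hsymm : ∀ v w, f'' v w = f'' w v := hFC2.isSymmSndFDerivAt (by simp)
  have hDFdiff : DifferentiableAt ℝ (fderiv ℝ F) (0, p) := by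
    have : ContDiffAt ℝ 1 (fderiv ℝ F) (0, p) :=
      (hFq _ h0p).fderiv_right (WithTop.coe_le_coe.mpr le_top)
    exact this.differentiableAt (by simp)
  -- compute f'' (0, v) (1, 0) = fderiv Y p v
  have hkey : ∀ v : (Fin m → ℝ), f'' (0, v) (1, 0) = fderiv ℝ Y p v := by
    intro v
    -- evaluation map at (1,0)
    set ev : ((ℝ × (Fin m → ℝ)) →L[ℝ] (Fin m → ℝ)) →L[ℝ] (Fin m → ℝ) :=
      ContinuousLinearMap.apply ℝ (Fin m → ℝ) ((1:ℝ), (0:(Fin m → ℝ)))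
    have h1 : fderiv ℝ (fun q => fderiv ℝ F q (1, 0)) (0, p) = ev.comp f'' := by
      have : HasFDerivAt (fun q => ev (fderiv ℝ F q)) (ev.comp f'') (0, p) :=
        ev.hasFDerivAt.comp _ hDFdiff.hasFDerivAt
      exact this.fderiv
    have hev : (fun q => fderiv ℝ F q (1, 0)) =ᶠ[nhds ((0:ℝ), p)] (fun q => Y (F q)) :=
      Filter.eventuallyEq_of_mem (hS.mem_nhds h0p) (fun q hq => hFt q hq)
    have hYdiff : DifferentiableAt ℝ Y p :=
      ((hY.contDiffAt (hU.mem_nhds hp)).differentiableAt (by simp))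
    have hYF : fderiv ℝ (fun q => Y (F q)) (0, p)
        = (fderiv ℝ Y p).comp (fderiv ℝ F (0, p)) := by
      have hFp : F (0, p) = p := hK0 p hpU₀
      rw [show (fun q => Y (F q)) = Y ∘ F from rfl,
        fderiv_comp _ (by rw [hFp]; exact hYdiff) (hFdiff _ h0p), hFp]
    have h2 : ev.comp f'' = (fderiv ℝ Y p).comp (fderiv ℝ F (0, p)) := by
      rw [← h1, hev.fderiv_eq, hYF]
    have h3 : f'' (0, v) (1, 0) = (fderiv ℝ Y p) (fderiv ℝ F (0, p) (0, v)) := by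
      have := congrArg (fun L => L ((0:ℝ), v)) h2
      simpa [ev, ContinuousLinearMap.apply] using this
    rw [h3]
    have : fderiv ℝ F (0, p) ((0:ℝ), v) = v := by
      have := congrArg (fun L => L v) hDF0
      simpa using this
    rw [this]
  -- Step B : τ ↦ fderiv (K τ) p has derivative fderiv Y p at 0
  have hcurve : HasDerivAt (fun τ : ℝ => (τ, p)) ((1:ℝ), (0:(Fin m → ℝ))) 0 :=
    (hasDerivAt_id (0:ℝ)).prodMk (hasDerivAt_const 0 p)
  have hDFc : HasDerivAt (fun τ => fderiv ℝ F (τ, p)) (f'' (1, 0)) 0 := by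
    exact hDFdiff.hasFDerivAt.comp_hasDerivAt 0 hcurve
  -- composition with inr is a continuous linear map
  set Φ : ((ℝ × (Fin m → ℝ)) →L[ℝ] (Fin m → ℝ)) →L[ℝ] ((Fin m → ℝ) →L[ℝ] (Fin m → ℝ)) :=
    (ContinuousLinearMap.compL ℝ (Fin m → ℝ) (ℝ × (Fin m → ℝ)) (Fin m → ℝ)).flip
      (ContinuousLinearMap.inr ℝ ℝ (Fin m → ℝ)) with hΦ
  have hΦapp : ∀ L : (ℝ × (Fin m → ℝ)) →L[ℝ] (Fin m → ℝ),
      Φ L = L.comp (ContinuousLinearMap.inr ℝ ℝ (Fin m → ℝ)) := by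
    intro L; rfl
  have hAK : HasDerivAt (fun τ => fderiv ℝ (K τ) p) (fderiv ℝ Y p) 0 := by
    have h1 : HasDerivAt (fun τ => Φ (fderiv ℝ F (τ, p))) (Φ (f'' (1, 0))) 0 :=
      Φ.hasFDerivAt.comp_hasDerivAt 0 hDFc
    have h2 : Φ (f'' (1, 0)) = fderiv ℝ Y p := by
      apply ContinuousLinearMap.ext
      intro v
      calc Φ (f'' (1, 0)) v = f'' (1, 0) ((0:ℝ), v) := rfl
        _ = f'' ((0:ℝ), v) (1, 0) := hsymm _ _
        _ = fderiv ℝ Y p v := hkey v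
    rw [h2] at h1
    apply h1.congr_of_eventuallyEq
    filter_upwards [isOpen_Ioo.mem_nhds h0ε] with τ hτ
    rw [hA τ hτ, hΦapp]
  -- derivative of extC part
  have hg : HasDerivAt (fun τ => extC (fderiv ℝ (K τ) p) (B p))
      (extC (fderiv ℝ Y p) (B p)) 0 := hasDerivAt_extC hAK (B p)
  -- derivative of α (K τ p)
  have hKp : HasDerivAt (fun τ => K τ p) (Y p) 0 := by
    have := hKflow 0 h0ε p hpU₀
    rwa [hK0 p hpU₀] at this
  have hαdiff : DifferentiableAt ℝ α p :=
    (hα.contDiffAt (hU.mem_nhds hp)).differentiableAt (by simp)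
  have hαfd : HasFDerivAt α (fderiv ℝ α p) (K 0 p) := by
    rw [hK0 p hpU₀]; exact hαdiff.hasFDerivAt
  have hαc : HasDerivAt (fun τ => α (K τ p)) (fderiv ℝ α p (Y p)) 0 :=
    hαfd.comp_hasDerivAt 0 hKp
  -- restrict scalars to apply the product rule over ℝ
  set R : ((Fin m → ℂ) →L[ℂ] ℂ) →L[ℝ] ((Fin m → ℂ) →L[ℝ] ℂ) :=
    ContinuousLinearMap.restrictScalarsL ℂ (Fin m → ℂ) ℂ ℝ ℝ with hR
  have hαcR : HasDerivAt (fun τ => R (α (K τ p))) (R (fderiv ℝ α p (Y p))) 0 :=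
    R.hasFDerivAt.comp_hasDerivAt 0 hαc
  have hmain : HasDerivAt (fun τ => (R (α (K τ p))) (extC (fderiv ℝ (K τ) p) (B p)))
      ((R (fderiv ℝ α p (Y p))) (extC (fderiv ℝ (K 0) p) (B p))
        + (R (α (K 0 p))) (extC (fderiv ℝ Y p) (B p))) 0 :=
    hαcR.clm_apply hg
  have hK0p : K 0 p = p := hK0 p hpU₀
  have hg0 : extC (fderiv ℝ (K 0) p) (B p) = B p := by rw [hfK0, extC_id]
  rw [hK0p, hg0] at hmain
  -- identify the derivative value
  have hαB' : fderiv ℝ α p (Y p) (B p) + α p (fderiv ℝ B p (Y p)) = 0 := by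
    have hBdiff : DifferentiableAt ℝ B p :=
      (hB.contDiffAt (hU.mem_nhds hp)).differentiableAt (by simp)
    have hprod : HasFDerivAt (fun x => (R (α x)) (B x))
        ((R (α p)).comp (fderiv ℝ B p)
          + (R.comp (fderiv ℝ α p)).flip (B p)) p :=
      (R.hasFDerivAt.comp p hαdiff.hasFDerivAt).clm_apply hBdiff.hasFDerivAt
    have hzero : (fun x => (R (α x)) (B x)) =ᶠ[nhds p] (fun _ => (0:ℂ)) :=
      Filter.eventuallyEq_of_mem (hU.mem_nhds hp) (fun x hx => hαB x hx)
    have h0 : HasFDerivAt (fun x => (R (α x)) (B x)) (0 : (Fin m → ℝ) →L[ℝ] ℂ) p := by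
      exact (hasFDerivAt_const (0:ℂ) p).congr_of_eventuallyEq hzero
    have := hprod.unique h0
    have := congrArg (fun L => L (Y p)) this
    simpa [add_comm, hR] using this
  have hval : (R (fderiv ℝ α p (Y p))) (B p) + (R (α p)) (extC (fderiv ℝ Y p) (B p))
      = α p (extC (fderiv ℝ Y p) (B p) - (fderiv ℝ B p) (Y p)) := by
    have h1 : (R (fderiv ℝ α p (Y p))) (B p) = fderiv ℝ α p (Y p) (B p) := rfl
    have h2 : (R (α p)) (extC (fderiv ℝ Y p) (B p)) = α p (extC (fderiv ℝ Y p) (B p)) := rfl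
    rw [h1, h2, map_sub]
    have h3 : fderiv ℝ α p (Y p) (B p) = - α p (fderiv ℝ B p (Y p)) := by
      have := hαB'
      linear_combination this
    rw [h3]; ring
  rw [hval] at hmain
  exact hmain
end

section
/- Let q ≥ 1, let σ : ℂ^q → ℂ^q denote coordinatewise complex conjugation (whose fixed-point set is ℝ^q ⊆ ℂ^q), and let V ⊆ ℂ^q be a complex-linear subspace with V ∩ σ(V) = {0}. Define T′ = {α ∈ Hom_ℂ(ℂ^q, ℂ) : α(v) = 0 for all v ∈ V} and T⁰ = {τ ∈ T′ : τ(σ(w)) = conj(τ(w)) for all w ∈ ℂ^q}. Then for every ℂ-linear functional 𝔜 : T′ → ℂ the following are equivalent: (i) there exists a (necessarily unique) vector X ∈ ℝ^q such that 𝔜(α) = α(X) for all α ∈ T′; (ii) 𝔜(τ) ∈ ℝ for all τ ∈ T⁰. -/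
open Module Submodule

/-- Coordinatewise conjugation as a semilinear map. -/
def conjMap (q : ℕ) : (Fin q → ℂ) →ₛₗ[starRingEnd ℂ] (Fin q → ℂ) where
  toFun w := fun i => starRingEnd ℂ (w i)
  map_add' x y := by funext i; simp
  map_smul' c x := by funext i; simp [Pi.smul_apply, smul_eq_mul, mul_comm]

@[simp] lemma conjMap_apply (q : ℕ) (w : Fin q → ℂ) (i : Fin q) :
    conjMap q w i = starRingEnd ℂ (w i) := rfl

lemma conjMap_conjMap (q : ℕ) (w : Fin q → ℂ) : conjMap q (conjMap q w) = w := by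
  funext i; simp

/-- Conjugate of a dual functional: `w ↦ conj (β (σ w))`. -/
def conjDual (q : ℕ) (β : Module.Dual ℂ (Fin q → ℂ)) : Module.Dual ℂ (Fin q → ℂ) where
  toFun w := starRingEnd ℂ (β (conjMap q w))
  map_add' x y := by simp
  map_smul' c x := by simp

@[simp] lemma conjDual_apply (q : ℕ) (β : Module.Dual ℂ (Fin q → ℂ)) (w : Fin q → ℂ) :
    conjDual q β w = starRingEnd ℂ (β (conjMap q w)) := rfl

/-- Fiberwise linear algebra behind the realness criterion for holomorphic vector
fields: for a complex subspace `V ⊆ ℂ^q` with `V ∩ σ(V) = {0}` (σ = coordinatewise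
conjugation), a `ℂ`-linear functional `𝔜` on the annihilator `T' = V^⊥` is induced by
evaluation at a (necessarily unique) real vector `X ∈ ℝ^q ⊆ ℂ^q` if and only if `𝔜`
takes real values on the characteristic forms `T⁰ = {τ ∈ T' : τ∘σ = conj∘τ}`. -/
theorem stmt_9 (q : ℕ) (hq : 1 ≤ q) (V : Submodule ℂ (Fin q → ℂ))
    (hV : ∀ w : Fin q → ℂ, w ∈ V → (fun i => (starRingEnd ℂ) (w i)) ∈ V → w = 0)
    (Y : V.dualAnnihilator →ₗ[ℂ] ℂ) :
    (∃! X : Fin q → ℝ, ∀ α : V.dualAnnihilator,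
        Y α = (α : Module.Dual ℂ (Fin q → ℂ)) (fun i => (X i : ℂ))) ↔
    (∀ τ : V.dualAnnihilator,
        (∀ w : Fin q → ℂ,
          (τ : Module.Dual ℂ (Fin q → ℂ)) (fun i => (starRingEnd ℂ) (w i)) =
            (starRingEnd ℂ) ((τ : Module.Dual ℂ (Fin q → ℂ)) w)) →
        (starRingEnd ℂ) (Y τ) = Y τ) := by
  have hV' : ∀ w : Fin q → ℂ, w ∈ V → conjMap q w ∈ V → w = 0 := by
    intro w h1 h2; exact hV w h1 h2
  constructor
  · rintro ⟨X, hX, -⟩ τ hτ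
    rw [hX τ]
    have := hτ (fun i => (X i : ℂ))
    have hXr : (fun i => (starRingEnd ℂ) ((X i : ℂ))) = (fun i => (X i : ℂ)) := by
      funext i; simp [Complex.conj_ofReal]
    rw [hXr] at this
    exact this.symm
  · intro hreal
    -- Extend Y to a functional on the full dual, realized by a vector Z.
    obtain ⟨Z, hZ⟩ : ∃ Z : Fin q → ℂ, ∀ α : V.dualAnnihilator,
        (α : Module.Dual ℂ (Fin q → ℂ)) Z = Y α := by
      refine ⟨(Module.evalEquiv ℂ (Fin q → ℂ)).symm (Subspace.dualLift V.dualAnnihilator Y),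
        fun α => ?_⟩
      rw [Module.apply_evalEquiv_symm_apply]
      exact Subspace.dualLift_of_subtype α
    -- V' = σ(V), W = V ⊔ V'
    set V' : Submodule ℂ (Fin q → ℂ) := V.comap (conjMap q) with hV'def
    have hmemV' : ∀ w, w ∈ V' ↔ conjMap q w ∈ V := fun w => Iff.rfl
    set W : Submodule ℂ (Fin q → ℂ) := V ⊔ V' with hW
    have hσW : ∀ w ∈ W, conjMap q w ∈ W := by
      intro w hw
      obtain ⟨v, hv, u, hu, rfl⟩ := mem_sup.mp hw
      rw [map_add]
      refine add_mem ?_ ?_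
      · exact Submodule.mem_sup_right ((hmemV' (conjMap q v)).mpr (by rwa [conjMap_conjMap]))
      · exact Submodule.mem_sup_left ((hmemV' u).mp hu)
    set x : Fin q → ℂ := Z - conjMap q Z with hx
    -- x is annihilated by every functional in W.dualAnnihilator
    have hxW : x ∈ W := by
      rw [← Subspace.forall_mem_dualAnnihilator_apply_eq_zero_iff]
      intro β hβ
      have hβV : ∀ v ∈ V, β v = 0 := fun v hv =>
        (Submodule.mem_dualAnnihilator β).mp hβ v (Submodule.mem_sup_left hv)
      have hcβV : ∀ v ∈ V, conjDual q β v = 0 := by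
        intro v hv
        have : β (conjMap q v) = 0 :=
          (Submodule.mem_dualAnnihilator β).mp hβ _ (hσW v (Submodule.mem_sup_left hv))
        simp [this]
      -- τ₁ = β + conjDual β, τ₂ = I • (β - conjDual β) are characteristic forms
      have hτ1mem : β + conjDual q β ∈ V.dualAnnihilator := by
        rw [Submodule.mem_dualAnnihilator]
        intro v hv; simp [hβV v hv, hcβV v hv]
      have hτ2mem : (Complex.I) • (β - conjDual q β) ∈ V.dualAnnihilator := by
        rw [Submodule.mem_dualAnnihilator]
        intro v hv; simp [hβV v hv, hcβV v hv]
      have hτ1real : ∀ w : Fin q → ℂ,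
          (β + conjDual q β) (fun i => (starRingEnd ℂ) (w i)) =
            (starRingEnd ℂ) ((β + conjDual q β) w) := by
        intro w
        have hc : (fun i => (starRingEnd ℂ) (w i)) = conjMap q w := rfl
        simp only [hc, LinearMap.add_apply, conjDual_apply, conjMap_conjMap, map_add,
          RingHom.id_apply, Complex.conj_conj]
        ring
      have hτ2real : ∀ w : Fin q → ℂ,
          ((Complex.I) • (β - conjDual q β)) (fun i => (starRingEnd ℂ) (w i)) =
            (starRingEnd ℂ) (((Complex.I) • (β - conjDual q β)) w) := by
        intro w
        have hc : (fun i => (starRingEnd ℂ) (w i)) = conjMap q w := rfl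
        simp only [hc, LinearMap.smul_apply, LinearMap.sub_apply, conjDual_apply,
          conjMap_conjMap, map_mul, map_sub, smul_eq_mul, RingHom.id_apply,
          Complex.conj_I, Complex.conj_conj]
        ring
      -- realness of Y on them
      have h1 : (starRingEnd ℂ) (Y ⟨_, hτ1mem⟩) = Y ⟨_, hτ1mem⟩ := hreal ⟨_, hτ1mem⟩ hτ1real
      have h2 : (starRingEnd ℂ) (Y ⟨_, hτ2mem⟩) = Y ⟨_, hτ2mem⟩ := hreal ⟨_, hτ2mem⟩ hτ2real
      rw [← hZ ⟨_, hτ1mem⟩] at h1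
      rw [← hZ ⟨_, hτ2mem⟩] at h2
      -- τᵢ (Z - σZ) = 0
      have e1 : (β + conjDual q β) x = 0 := by
        have hrc : (β + conjDual q β) (conjMap q Z) =
            (starRingEnd ℂ) ((β + conjDual q β) Z) := by
          have := hτ1real Z
          exact this
        have : (β + conjDual q β) x = (β + conjDual q β) Z - (β + conjDual q β) (conjMap q Z) := by
          rw [hx, map_sub]
        rw [this, hrc, h1, sub_self]
      have e2 : ((Complex.I) • (β - conjDual q β)) x = 0 := by
        have hrc : ((Complex.I) • (β - conjDual q β)) (conjMap q Z) =
            (starRingEnd ℂ) (((Complex.I) • (β - conjDual q β)) Z) := by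
          have := hτ2real Z
          exact this
        have : ((Complex.I) • (β - conjDual q β)) x =
            ((Complex.I) • (β - conjDual q β)) Z -
              ((Complex.I) • (β - conjDual q β)) (conjMap q Z) := by
          rw [hx, map_sub]
        rw [this, hrc, h2, sub_self]
      -- combine
      have e1' : β x + conjDual q β x = 0 := by simpa using e1
      have e2' : β x - conjDual q β x = 0 := by
        have : Complex.I * (β x - conjDual q β x) = 0 := by simpa using e2
        rcases mul_eq_zero.mp this with h | h
        · exact absurd h Complex.I_ne_zero
        · exact h
      have : (2 : ℂ) * β x = 0 := by linear_combination e1' + e2'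
      have h2ne : (2 : ℂ) ≠ 0 := two_ne_zero
      rcases mul_eq_zero.mp this with h | h
      · exact absurd h h2ne
      · exact h
    -- decompose x = v + σ u with v, u ∈ V
    obtain ⟨v, hv, u', hu', hsum⟩ := mem_sup.mp hxW
    set u : Fin q → ℂ := conjMap q u' with hu'def
    have hu : u ∈ V := (hmemV' u').mp hu'
    have hσx : conjMap q x = -x := by
      rw [hx, map_sub, conjMap_conjMap, neg_sub]
    have hσsum : conjMap q v + u = -x := by
      have := congrArg (conjMap q) hsum
      rw [map_add, hσx] at this
      rw [← this, hu'def]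
    -- w₀ = v + u satisfies w₀ + σ w₀ = 0
    have hw0 : (v + u) + conjMap q (v + u) = 0 := by
      have h1 : v + u' = x := hsum
      have hσu : conjMap q u = u' := by rw [hu'def, conjMap_conjMap]
      rw [map_add, hσu]
      have : (v + u) + (conjMap q v + u') = (v + u') + (conjMap q v + u) := by abel
      rw [this, h1, hσsum, add_neg_cancel]
    have hw0V : v + u ∈ V := add_mem hv hu
    have hw0eq : v + u = 0 := by
      apply hV' _ hw0V
      have : conjMap q (v + u) = -(v + u) := eq_neg_of_add_eq_zero_right hw0
      rw [this]
      exact neg_mem hw0V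
    have huv : u = -v := eq_neg_of_add_eq_zero_right hw0eq
    -- X = Z - v is real
    set Xc : Fin q → ℂ := Z - v with hXc
    have hXcreal : conjMap q Xc = Xc := by
      have hxvv : x = v - conjMap q v := by
        rw [← hsum]
        have : u' = conjMap q u := by rw [hu'def, conjMap_conjMap]
        rw [this, huv, map_neg]
        abel
      rw [hXc, map_sub]
      have : conjMap q Z = Z - x := by rw [hx]; abel
      rw [this, hxvv]
      abel
    set X : Fin q → ℝ := fun i => (Xc i).re with hXdef
    have hXcoe : (fun i => (X i : ℂ)) = Xc := by
      funext i
      have : (starRingEnd ℂ) (Xc i) = Xc i := congrFun hXcreal i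
      exact Complex.conj_eq_iff_re.mp this
    refine ⟨X, ?_, ?_⟩
    · intro α
      rw [hXcoe, hXc, map_sub, hZ α]
      have : (α : Module.Dual ℂ (Fin q → ℂ)) v = 0 :=
        (Submodule.mem_dualAnnihilator _).mp α.2 v hv
      rw [this, sub_zero]
    · -- uniqueness
      intro X₁ hX₁
      have hd : (fun i => ((X₁ i : ℂ) - (X i : ℂ))) ∈ V := by
        rw [← Subspace.dualAnnihilator_dualCoannihilator_eq (W := V),
          Submodule.mem_dualCoannihilator]
        intro φ hφ
        have h1 := hX₁ ⟨φ, hφ⟩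
        have h2 : Y ⟨φ, hφ⟩ = φ (fun i => (X i : ℂ)) := by
          rw [hXcoe, hXc, map_sub, hZ ⟨φ, hφ⟩]
          have : φ v = 0 := (Submodule.mem_dualAnnihilator _).mp hφ v hv
          simp [this]
        have hdiff : (fun i => ((X₁ i : ℂ) - (X i : ℂ)))
            = (fun i => (X₁ i : ℂ)) - (fun i => (X i : ℂ)) := rfl
        rw [hdiff, map_sub, ← h1, ← h2, sub_self]
      have hd0 : (fun i => ((X₁ i : ℂ) - (X i : ℂ))) = 0 := by
        apply hV' _ hd
        have : conjMap q (fun i => ((X₁ i : ℂ) - (X i : ℂ)))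
            = (fun i => ((X₁ i : ℂ) - (X i : ℂ))) := by
          funext i; simp [Complex.conj_ofReal]
        rw [this]; exact hd
      funext i
      have := congrFun hd0 i
      have : (X₁ i : ℂ) = (X i : ℂ) := by
        have h := sub_eq_zero.mp this
        exact h
      exact_mod_cast this
end

section
/- Let n ≥ 1, let m ≥ 1 be an integer, and let φ be a smooth real-valued function on a neighborhood of 0 in ℂⁿ × ℝ with φ(0) = 0 and φ_{z_r}(0) = φ_{z̄_r}(0) = 0 for all r = 1, …, n. On a neighborhood of 0 where 1 + i·(s^m φ)_s ≠ 0, define b^j = −i · s^m · φ_{z̄_j} / (1 + i·(s^m φ)_s) for j = 1, …, n, and the first-order operators L_j = ∂_{z̄_j} + b^j ∂_s and L̄_ℓ = ∂_{z_ℓ} + conj(b^ℓ) ∂_s acting on smooth ℂ-valued functions of (z, s). Then for every j, ℓ ∈ {1, …, n} there exists a smooth function λ^j_ℓ on a neighborhood of 0 in ℂⁿ × ℝ such that L_j(conj(b^ℓ)) − L̄_ℓ(b^j) = s^m · λ^j_ℓ on that neighborhood, and λ^j_ℓ(0) = 2i · φ_{z̄_j z_ℓ}(0). -/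
noncomputable section

/-- Partial derivative in the direction `x_j` (real part of `z_j`) of a function on
`ℂⁿ × ℝ`. -/
def wX {n : ℕ} (j : Fin n) (F : (Fin n → ℂ) × ℝ → ℂ) (p : (Fin n → ℂ) × ℝ) : ℂ :=
  deriv (fun t : ℝ => F (p.1 + Pi.single j ((t : ℂ)), p.2)) 0

/-- Partial derivative in the direction `y_j` (imaginary part of `z_j`). -/
def wY {n : ℕ} (j : Fin n) (F : (Fin n → ℂ) × ℝ → ℂ) (p : (Fin n → ℂ) × ℝ) : ℂ :=
  deriv (fun t : ℝ => F (p.1 + Pi.single j ((t : ℂ) * Complex.I), p.2)) 0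

/-- Wirtinger derivative `F_{z_j} = ½(F_{x_j} - i F_{y_j})`. -/
def wz {n : ℕ} (j : Fin n) (F : (Fin n → ℂ) × ℝ → ℂ) (p : (Fin n → ℂ) × ℝ) : ℂ :=
  (wX j F p - Complex.I * wY j F p) / 2

/-- Wirtinger derivative `F_{z̄_j} = ½(F_{x_j} + i F_{y_j})`. -/
def wzbar {n : ℕ} (j : Fin n) (F : (Fin n → ℂ) × ℝ → ℂ) (p : (Fin n → ℂ) × ℝ) : ℂ :=
  (wX j F p + Complex.I * wY j F p) / 2

/-- Partial derivative in the variable `s`. -/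
def dS {n : ℕ} (F : (Fin n → ℂ) × ℝ → ℂ) (p : (Fin n → ℂ) × ℝ) : ℂ :=
  deriv (fun s : ℝ => F (p.1, s)) p.2

/-- The coefficient `b^j = -i s^m φ_{z̄_j} / (1 + i (s^m φ)_s)`. -/
def bcoef {n : ℕ} (m : ℕ) (φ : (Fin n → ℂ) × ℝ → ℝ) (j : Fin n)
    (p : (Fin n → ℂ) × ℝ) : ℂ :=
  -Complex.I * (p.2 : ℂ) ^ m * wzbar j (fun q => (φ q : ℂ)) p /
    (1 + Complex.I * dS (fun q => ((q.2 ^ m * φ q : ℝ) : ℂ)) p)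

/-- The CR vector field `L_j = ∂_{z̄_j} + b^j ∂_s` applied to `F`. -/
def Lop {n : ℕ} (m : ℕ) (φ : (Fin n → ℂ) × ℝ → ℝ) (j : Fin n)
    (F : (Fin n → ℂ) × ℝ → ℂ) (p : (Fin n → ℂ) × ℝ) : ℂ :=
  wzbar j F p + bcoef m φ j p * dS F p

/-- The conjugate vector field `L̄_ℓ = ∂_{z_ℓ} + conj(b^ℓ) ∂_s` applied to `F`. -/
def Lbarop {n : ℕ} (m : ℕ) (φ : (Fin n → ℂ) × ℝ → ℝ) (ℓ : Fin n)
    (F : (Fin n → ℂ) × ℝ → ℂ) (p : (Fin n → ℂ) × ℝ) : ℂ :=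
  wz ℓ F p + (starRingEnd ℂ) (bcoef m φ ℓ p) * dS F p

namespace CR10

variable {n : ℕ}

/-- direction vector for `wX`. -/
def vX (j : Fin n) : (Fin n → ℂ) × ℝ := (Pi.single j 1, 0)
/-- direction vector for `wY`. -/
def vY (j : Fin n) : (Fin n → ℂ) × ℝ := (Pi.single j Complex.I, 0)
/-- direction vector for `dS`. -/
def vS : (Fin n → ℂ) × ℝ := (0, 1)

lemma curveX_hasDerivAt (j : Fin n) (p : (Fin n → ℂ) × ℝ) (t : ℝ) :
    HasDerivAt (fun t : ℝ => ((p.1 + Pi.single j ((t : ℂ)), p.2) : (Fin n → ℂ) × ℝ))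
      (vX j) t := by
  have h1 : HasDerivAt (fun t : ℝ => p.1 + Pi.single j ((t : ℂ))) (Pi.single j (1:ℂ)) t := by
    have heq : (fun t : ℝ => p.1 + Pi.single j ((t : ℂ)))
        = fun t : ℝ => p.1 + t • (Pi.single j (1 : ℂ) : Fin n → ℂ) := by
      funext t
      rw [← Pi.single_smul']
      norm_num [Complex.real_smul]
    rw [heq]
    simpa using (((hasDerivAt_id t).smul_const (Pi.single j (1:ℂ)))).const_add p.1
  exact h1.prodMk (hasDerivAt_const t p.2)

lemma curveY_hasDerivAt (j : Fin n) (p : (Fin n → ℂ) × ℝ) (t : ℝ) :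
    HasDerivAt (fun t : ℝ => ((p.1 + Pi.single j ((t : ℂ) * Complex.I), p.2) : (Fin n → ℂ) × ℝ))
      (vY j) t := by
  have h1 : HasDerivAt (fun t : ℝ => p.1 + Pi.single j ((t : ℂ) * Complex.I))
      (Pi.single j Complex.I) t := by
    have heq : (fun t : ℝ => p.1 + Pi.single j ((t : ℂ) * Complex.I))
        = fun t : ℝ => p.1 + t • (Pi.single j Complex.I : Fin n → ℂ) := by
      funext t
      rw [← Pi.single_smul']
      norm_num [Complex.real_smul]
    rw [heq]
    simpa using (((hasDerivAt_id t).smul_const (Pi.single j Complex.I))).const_add p.1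
  exact h1.prodMk (hasDerivAt_const t p.2)

lemma curveS_hasDerivAt (p : (Fin n → ℂ) × ℝ) (s : ℝ) :
    HasDerivAt (fun s : ℝ => ((p.1, s) : (Fin n → ℂ) × ℝ)) vS s :=
  (hasDerivAt_const s p.1).prodMk (hasDerivAt_id s)

lemma wX_eq {F : (Fin n → ℂ) × ℝ → ℂ} {p : (Fin n → ℂ) × ℝ} (j : Fin n)
    (hF : DifferentiableAt ℝ F p) : wX j F p = fderiv ℝ F p (vX j) := by
  have h := hF.hasFDerivAt.comp_hasDerivAt_of_eq 0 (curveX_hasDerivAt j p 0) (by simp)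
  exact h.deriv

lemma wY_eq {F : (Fin n → ℂ) × ℝ → ℂ} {p : (Fin n → ℂ) × ℝ} (j : Fin n)
    (hF : DifferentiableAt ℝ F p) : wY j F p = fderiv ℝ F p (vY j) := by
  have h := hF.hasFDerivAt.comp_hasDerivAt_of_eq 0 (curveY_hasDerivAt j p 0) (by simp)
  exact h.deriv

lemma dS_eq {F : (Fin n → ℂ) × ℝ → ℂ} {p : (Fin n → ℂ) × ℝ}
    (hF : DifferentiableAt ℝ F p) : dS F p = fderiv ℝ F p vS := by
  have h := hF.hasFDerivAt.comp_hasDerivAt_of_eq p.2 (curveS_hasDerivAt p p.2) (by simp)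
  exact h.deriv

-- eventual-equality congruence
lemma wX_congr {F G : (Fin n → ℂ) × ℝ → ℂ} {p : (Fin n → ℂ) × ℝ} (j : Fin n)
    (h : F =ᶠ[nhds p] G) : wX j F p = wX j G p := by
  apply Filter.EventuallyEq.deriv_eq
  have hc : Filter.Tendsto (fun t : ℝ => ((p.1 + Pi.single j ((t : ℂ)), p.2) : (Fin n → ℂ) × ℝ))
      (nhds 0) (nhds p) := by
    have := (curveX_hasDerivAt j p 0).continuousAt
    simpa using this.tendsto
  exact h.comp_tendsto hc

lemma wY_congr {F G : (Fin n → ℂ) × ℝ → ℂ} {p : (Fin n → ℂ) × ℝ} (j : Fin n)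
    (h : F =ᶠ[nhds p] G) : wY j F p = wY j G p := by
  apply Filter.EventuallyEq.deriv_eq
  have hc : Filter.Tendsto
      (fun t : ℝ => ((p.1 + Pi.single j ((t : ℂ) * Complex.I), p.2) : (Fin n → ℂ) × ℝ))
      (nhds 0) (nhds p) := by
    have := (curveY_hasDerivAt j p 0).continuousAt
    simpa using this.tendsto
  exact h.comp_tendsto hc

lemma wz_congr {F G : (Fin n → ℂ) × ℝ → ℂ} {p : (Fin n → ℂ) × ℝ} (j : Fin n)
    (h : F =ᶠ[nhds p] G) : wz j F p = wz j G p := by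
  unfold wz; rw [wX_congr j h, wY_congr j h]

lemma wzbar_congr {F G : (Fin n → ℂ) × ℝ → ℂ} {p : (Fin n → ℂ) × ℝ} (j : Fin n)
    (h : F =ᶠ[nhds p] G) : wzbar j F p = wzbar j G p := by
  unfold wzbar; rw [wX_congr j h, wY_congr j h]

-- constant multiples (unconditional)
lemma wX_const_mul (j : Fin n) (c : ℂ) (F : (Fin n → ℂ) × ℝ → ℂ) (p : (Fin n → ℂ) × ℝ) :
    wX j (fun q => c * F q) p = c * wX j F p := deriv_const_mul_field c

lemma wY_const_mul (j : Fin n) (c : ℂ) (F : (Fin n → ℂ) × ℝ → ℂ) (p : (Fin n → ℂ) × ℝ) :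
    wY j (fun q => c * F q) p = c * wY j F p := deriv_const_mul_field c

lemma wz_const_mul (j : Fin n) (c : ℂ) (F : (Fin n → ℂ) × ℝ → ℂ) (p : (Fin n → ℂ) × ℝ) :
    wz j (fun q => c * F q) p = c * wz j F p := by
  unfold wz; rw [wX_const_mul, wY_const_mul]; ring

-- s^m factors out of z-derivatives (unconditional)
lemma wX_pow_mul (j : Fin n) (m : ℕ) (F : (Fin n → ℂ) × ℝ → ℂ) (p : (Fin n → ℂ) × ℝ) :
    wX j (fun q => (q.2 : ℂ) ^ m * F q) p = (p.2 : ℂ) ^ m * wX j F p := by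
  have h : wX j (fun q => (q.2 : ℂ) ^ m * F q) p
      = deriv (fun t : ℝ => (p.2 : ℂ) ^ m * F (p.1 + Pi.single j ((t : ℂ)), p.2)) 0 := rfl
  rw [h, deriv_const_mul_field]; rfl

lemma wY_pow_mul (j : Fin n) (m : ℕ) (F : (Fin n → ℂ) × ℝ → ℂ) (p : (Fin n → ℂ) × ℝ) :
    wY j (fun q => (q.2 : ℂ) ^ m * F q) p = (p.2 : ℂ) ^ m * wY j F p := by
  have h : wY j (fun q => (q.2 : ℂ) ^ m * F q) p
      = deriv (fun t : ℝ => (p.2 : ℂ) ^ m * F (p.1 + Pi.single j ((t : ℂ) * Complex.I), p.2)) 0 :=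
    rfl
  rw [h, deriv_const_mul_field]; rfl

lemma wzbar_pow_mul (j : Fin n) (m : ℕ) (F : (Fin n → ℂ) × ℝ → ℂ) (p : (Fin n → ℂ) × ℝ) :
    wzbar j (fun q => (q.2 : ℂ) ^ m * F q) p = (p.2 : ℂ) ^ m * wzbar j F p := by
  unfold wzbar; rw [wX_pow_mul, wY_pow_mul]; ring

lemma wz_pow_mul (j : Fin n) (m : ℕ) (F : (Fin n → ℂ) × ℝ → ℂ) (p : (Fin n → ℂ) × ℝ) :
    wz j (fun q => (q.2 : ℂ) ^ m * F q) p = (p.2 : ℂ) ^ m * wz j F p := by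
  unfold wz; rw [wX_pow_mul, wY_pow_mul]; ring

-- conjugation (unconditional)
lemma wX_conj (j : Fin n) (F : (Fin n → ℂ) × ℝ → ℂ) (p : (Fin n → ℂ) × ℝ) :
    wX j (fun q => (starRingEnd ℂ) (F q)) p = (starRingEnd ℂ) (wX j F p) :=
  deriv.star

lemma wY_conj (j : Fin n) (F : (Fin n → ℂ) × ℝ → ℂ) (p : (Fin n → ℂ) × ℝ) :
    wY j (fun q => (starRingEnd ℂ) (F q)) p = (starRingEnd ℂ) (wY j F p) :=
  deriv.star

lemma conj_two : (starRingEnd ℂ) 2 = 2 := map_ofNat _ 2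

lemma wzbar_conj (j : Fin n) (F : (Fin n → ℂ) × ℝ → ℂ) (p : (Fin n → ℂ) × ℝ) :
    wzbar j (fun q => (starRingEnd ℂ) (F q)) p = (starRingEnd ℂ) (wz j F p) := by
  unfold wzbar wz
  rw [wX_conj, wY_conj, map_div₀, map_sub, map_mul, Complex.conj_I, conj_two]
  ring

lemma wz_conj (j : Fin n) (F : (Fin n → ℂ) × ℝ → ℂ) (p : (Fin n → ℂ) × ℝ) :
    wz j (fun q => (starRingEnd ℂ) (F q)) p = (starRingEnd ℂ) (wzbar j F p) := by
  unfold wzbar wz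
  rw [wX_conj, wY_conj, map_div₀, map_add, map_mul, Complex.conj_I, conj_two]
  ring

-- product rules (pointwise, assuming differentiability)
lemma wX_mul {F G : (Fin n → ℂ) × ℝ → ℂ} {p : (Fin n → ℂ) × ℝ} (j : Fin n)
    (hF : DifferentiableAt ℝ F p) (hG : DifferentiableAt ℝ G p) :
    wX j (fun q => F q * G q) p = F p * wX j G p + G p * wX j F p := by
  rw [wX_eq j (hF.fun_mul hG), fderiv_fun_mul hF hG, wX_eq j hF, wX_eq j hG]
  simp [smul_eq_mul]

lemma wY_mul {F G : (Fin n → ℂ) × ℝ → ℂ} {p : (Fin n → ℂ) × ℝ} (j : Fin n)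
    (hF : DifferentiableAt ℝ F p) (hG : DifferentiableAt ℝ G p) :
    wY j (fun q => F q * G q) p = F p * wY j G p + G p * wY j F p := by
  rw [wY_eq j (hF.fun_mul hG), fderiv_fun_mul hF hG, wY_eq j hF, wY_eq j hG]
  simp [smul_eq_mul]

lemma wz_mul {F G : (Fin n → ℂ) × ℝ → ℂ} {p : (Fin n → ℂ) × ℝ} (j : Fin n)
    (hF : DifferentiableAt ℝ F p) (hG : DifferentiableAt ℝ G p) :
    wz j (fun q => F q * G q) p = F p * wz j G p + G p * wz j F p := by
  unfold wz; rw [wX_mul j hF hG, wY_mul j hF hG]; ring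

-- the s-derivative of s^m * H
lemma hasDerivAt_section {H : (Fin n → ℂ) × ℝ → ℂ} {p : (Fin n → ℂ) × ℝ}
    (hH : DifferentiableAt ℝ H p) :
    HasDerivAt (fun s : ℝ => H (p.1, s)) (dS H p) p.2 := by
  rw [dS_eq hH]
  exact hH.hasFDerivAt.comp_hasDerivAt_of_eq p.2 (curveS_hasDerivAt p p.2) (by simp)

lemma dS_pow_mul {H : (Fin n → ℂ) × ℝ → ℂ} {p : (Fin n → ℂ) × ℝ} (m : ℕ)
    (hH : DifferentiableAt ℝ H p) :
    dS (fun q => (q.2 : ℂ) ^ m * H q) p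
      = (m : ℂ) * (p.2 : ℂ) ^ (m - 1) * H p + (p.2 : ℂ) ^ m * dS H p := by
  have hpow : HasDerivAt (fun s : ℝ => ((s : ℂ)) ^ m) ((m : ℂ) * (p.2 : ℂ) ^ (m - 1)) p.2 := by
    have h1 := (hasDerivAt_pow m p.2).ofReal_comp
    have heq : (fun s : ℝ => (((s ^ m : ℝ)) : ℂ)) = fun s : ℝ => ((s : ℂ)) ^ m := by
      funext s; push_cast; ring
    rw [heq] at h1
    convert h1 using 1
    push_cast; ring
  have h := hpow.fun_mul (hasDerivAt_section hH)
  have h2 : dS (fun q => (q.2 : ℂ) ^ m * H q) p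
      = deriv (fun s : ℝ => ((s : ℂ)) ^ m * H (p.1, s)) p.2 := rfl
  rw [h2, h.deriv]

-- smoothness of the derivative operators on open sets
lemma contDiffOn_wX {F : (Fin n → ℂ) × ℝ → ℂ} {U : Set ((Fin n → ℂ) × ℝ)} (hU : IsOpen U)
    (hF : ContDiffOn ℝ (⊤ : ℕ∞) F U) (j : Fin n) : ContDiffOn ℝ (⊤ : ℕ∞) (wX j F) U := by
  have h : ContDiffOn ℝ (⊤ : ℕ∞) (fun p => fderiv ℝ F p (vX j)) U :=
    (hF.fderiv_of_isOpen (m := (⊤ : ℕ∞)) hU (by simp)).clm_apply contDiffOn_const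
  exact h.congr fun p hp =>
    wX_eq j ((hF.contDiffAt (hU.mem_nhds hp)).differentiableAt (by norm_num))

lemma contDiffOn_wY {F : (Fin n → ℂ) × ℝ → ℂ} {U : Set ((Fin n → ℂ) × ℝ)} (hU : IsOpen U)
    (hF : ContDiffOn ℝ (⊤ : ℕ∞) F U) (j : Fin n) : ContDiffOn ℝ (⊤ : ℕ∞) (wY j F) U := by
  have h : ContDiffOn ℝ (⊤ : ℕ∞) (fun p => fderiv ℝ F p (vY j)) U :=
    (hF.fderiv_of_isOpen (m := (⊤ : ℕ∞)) hU (by simp)).clm_apply contDiffOn_const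
  exact h.congr fun p hp =>
    wY_eq j ((hF.contDiffAt (hU.mem_nhds hp)).differentiableAt (by norm_num))

lemma contDiffOn_dS {F : (Fin n → ℂ) × ℝ → ℂ} {U : Set ((Fin n → ℂ) × ℝ)} (hU : IsOpen U)
    (hF : ContDiffOn ℝ (⊤ : ℕ∞) F U) : ContDiffOn ℝ (⊤ : ℕ∞) (dS F) U := by
  have h : ContDiffOn ℝ (⊤ : ℕ∞) (fun p => fderiv ℝ F p (vS)) U :=
    (hF.fderiv_of_isOpen (m := (⊤ : ℕ∞)) hU (by simp)).clm_apply contDiffOn_const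
  exact h.congr fun p hp =>
    dS_eq ((hF.contDiffAt (hU.mem_nhds hp)).differentiableAt (by norm_num))

lemma contDiffOn_wz {F : (Fin n → ℂ) × ℝ → ℂ} {U : Set ((Fin n → ℂ) × ℝ)} (hU : IsOpen U)
    (hF : ContDiffOn ℝ (⊤ : ℕ∞) F U) (j : Fin n) : ContDiffOn ℝ (⊤ : ℕ∞) (wz j F) U := by
  unfold wz
  exact (((contDiffOn_wX hU hF j).sub ((contDiffOn_wY hU hF j).const_smul
    Complex.I)).div_const 2).congr fun p hp => by simp [smul_eq_mul]

lemma contDiffOn_wzbar {F : (Fin n → ℂ) × ℝ → ℂ} {U : Set ((Fin n → ℂ) × ℝ)} (hU : IsOpen U)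
    (hF : ContDiffOn ℝ (⊤ : ℕ∞) F U) (j : Fin n) : ContDiffOn ℝ (⊤ : ℕ∞) (wzbar j F) U := by
  unfold wzbar
  exact (((contDiffOn_wX hU hF j).add ((contDiffOn_wY hU hF j).const_smul
    Complex.I)).div_const 2).congr fun p hp => by simp [smul_eq_mul]

-- differentiability on open sets
lemma diffAt_of_contDiffOn {F : (Fin n → ℂ) × ℝ → ℂ} {U : Set ((Fin n → ℂ) × ℝ)}
    {p : (Fin n → ℂ) × ℝ} (hU : IsOpen U) (hF : ContDiffOn ℝ (⊤ : ℕ∞) F U) (hp : p ∈ U) :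
    DifferentiableAt ℝ F p :=
  (hF.contDiffAt (hU.mem_nhds hp)).differentiableAt (by norm_num)

/-- Equality of mixed Wirtinger derivatives at `0` (Clairaut). -/
lemma mixed_symm {U : Set ((Fin n → ℂ) × ℝ)} (hU : IsOpen U) (h0 : (0 : (Fin n → ℂ) × ℝ) ∈ U)
    {F : (Fin n → ℂ) × ℝ → ℂ} (hF : ContDiffOn ℝ (⊤ : ℕ∞) F U) (j ℓ : Fin n) :
    wzbar j (wz ℓ F) 0 = wz ℓ (wzbar j F) 0 := by
  have hFat : ContDiffAt ℝ (⊤ : ℕ∞) F 0 := hF.contDiffAt (hU.mem_nhds h0)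
  have hsymm := hFat.isSymmSndFDerivAt (by rw [minSmoothness_of_isRCLikeNormedField]; exact WithTop.coe_le_coe.mpr (le_top : (2 : ℕ∞) ≤ ⊤))
  have hd1 : ContDiffOn ℝ (⊤ : ℕ∞) (fderiv ℝ F) U := hF.fderiv_of_isOpen (m := (⊤ : ℕ∞)) hU (by simp)
  have hd1at : DifferentiableAt ℝ (fderiv ℝ F) 0 :=
    (hd1.contDiffAt (hU.mem_nhds h0)).differentiableAt (by norm_num)
  have hA : ∀ v : (Fin n → ℂ) × ℝ, DifferentiableAt ℝ (fun p => fderiv ℝ F p v) 0 :=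
    fun v => hd1at.clm_apply (differentiableAt_const v)
  set T := fderiv ℝ (fderiv ℝ F) 0 with hT
  have hTA : ∀ v w : (Fin n → ℂ) × ℝ,
      fderiv ℝ (fun p => fderiv ℝ F p v) 0 w = T w v := by
    intro v w
    rw [fderiv_clm_apply hd1at (differentiableAt_const v)]
    simp
    rfl
  -- the function W1 representing wz ℓ F near 0
  set W1 : (Fin n → ℂ) × ℝ → ℂ :=
    fun p => (1/2 : ℂ) * fderiv ℝ F p (vX ℓ) + (-Complex.I/2) * fderiv ℝ F p (vY ℓ) with hW1
  set W2 : (Fin n → ℂ) × ℝ → ℂ :=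
    fun p => (1/2 : ℂ) * fderiv ℝ F p (vX j) + (Complex.I/2) * fderiv ℝ F p (vY j) with hW2
  have hev1 : wz ℓ F =ᶠ[nhds 0] W1 := by
    filter_upwards [hU.mem_nhds h0] with p hp
    have hFp := diffAt_of_contDiffOn hU hF hp
    unfold wz
    rw [wX_eq ℓ hFp, wY_eq ℓ hFp, hW1]; ring
  have hev2 : wzbar j F =ᶠ[nhds 0] W2 := by
    filter_upwards [hU.mem_nhds h0] with p hp
    have hFp := diffAt_of_contDiffOn hU hF hp
    unfold wzbar
    rw [wX_eq j hFp, wY_eq j hFp, hW2]; ring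
  have hW1d : DifferentiableAt ℝ W1 0 := ((hA _).const_mul _).add ((hA _).const_mul _)
  have hW2d : DifferentiableAt ℝ W2 0 := ((hA _).const_mul _).add ((hA _).const_mul _)
  have hfW1 : ∀ w, fderiv ℝ W1 0 w
      = (1/2 : ℂ) * T w (vX ℓ) + (-Complex.I/2) * T w (vY ℓ) := by
    intro w
    rw [hW1, fderiv_fun_add ((hA _).const_mul _) ((hA _).const_mul _),
      fderiv_const_mul (hA _), fderiv_const_mul (hA _)]
    simp [hTA]
  have hfW2 : ∀ w, fderiv ℝ W2 0 w
      = (1/2 : ℂ) * T w (vX j) + (Complex.I/2) * T w (vY j) := by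
    intro w
    rw [hW2, fderiv_fun_add ((hA _).const_mul _) ((hA _).const_mul _),
      fderiv_const_mul (hA _), fderiv_const_mul (hA _)]
    simp [hTA]
  have e1 : wzbar j (wz ℓ F) 0 = wzbar j W1 0 := wzbar_congr j hev1
  have e2 : wz ℓ (wzbar j F) 0 = wz ℓ W2 0 := wz_congr ℓ hev2
  rw [e1, e2]
  unfold wzbar wz
  rw [wX_eq j hW1d, wY_eq j hW1d, wX_eq ℓ hW2d, wY_eq ℓ hW2d, hfW1, hfW1, hfW2, hfW2,
    hsymm (vX j) (vY ℓ), hsymm (vX j) (vX ℓ), hsymm (vY j) (vX ℓ), hsymm (vY j) (vY ℓ)]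
  ring

variable (m : ℕ) (φ : (Fin n → ℂ) × ℝ → ℝ)

/-- `(s^m φ)` as a complex-valued function. -/
def ψf : (Fin n → ℂ) × ℝ → ℂ := fun q => ((q.2 ^ m * φ q : ℝ) : ℂ)

/-- The denominator `1 + i (s^m φ)_s`. -/
def Dfun : (Fin n → ℂ) × ℝ → ℂ := fun q => 1 + Complex.I * dS (ψf m φ) q

/-- `b^r / s^m`. -/
def Gfun (r : Fin n) : (Fin n → ℂ) × ℝ → ℂ :=
  fun q => -Complex.I * wzbar r (fun q' => (φ q' : ℂ)) q / Dfun m φ q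

/-- `conj (b^r) / s^m`. -/
def Hfun (r : Fin n) : (Fin n → ℂ) × ℝ → ℂ := fun q => (starRingEnd ℂ) (Gfun m φ r q)

lemma bcoef_eq (r : Fin n) (p : (Fin n → ℂ) × ℝ) :
    bcoef m φ r p = (p.2 : ℂ) ^ m * Gfun m φ r p := by
  unfold bcoef Gfun Dfun ψf; ring

lemma conj_bcoef (r : Fin n) (p : (Fin n → ℂ) × ℝ) :
    (starRingEnd ℂ) (bcoef m φ r p) = (p.2 : ℂ) ^ m * Hfun m φ r p := by
  rw [bcoef_eq]; unfold Hfun; rw [map_mul, map_pow, Complex.conj_ofReal]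

/-- The function `λ^j_ℓ`. -/
def lamF (j ℓ : Fin n) : (Fin n → ℂ) × ℝ → ℂ := fun p =>
  wzbar j (Hfun m φ ℓ) p - wz ℓ (Gfun m φ j) p
    + (p.2 : ℂ) ^ m * (Gfun m φ j p * dS (Hfun m φ ℓ) p - Hfun m φ ℓ p * dS (Gfun m φ j) p)

lemma contDiffOn_ofReal_comp {f : (Fin n → ℂ) × ℝ → ℝ} {U : Set ((Fin n → ℂ) × ℝ)}
    (hf : ContDiffOn ℝ (⊤ : ℕ∞) f U) : ContDiffOn ℝ (⊤ : ℕ∞) (fun q => ((f q : ℝ) : ℂ)) U :=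
  (Complex.ofRealCLM.contDiff.comp_contDiffOn hf).congr fun p _ => by simp

end CR10

/-- For the hypersurface `Im w = (Re w)^m φ(z, z̄, Re w)` with `φ(0) = 0` and
`φ_{z_r}(0) = φ_{z̄_r}(0) = 0`: `L_j(conj b^ℓ) - L̄_ℓ(b^j) = s^m λ^j_ℓ` with `λ^j_ℓ`
smooth near `0` and `λ^j_ℓ(0) = 2i φ_{z̄_j z_ℓ}(0)`. -/
theorem stmt_10 {n : ℕ} (hn : 1 ≤ n) (m : ℕ) (hm : 1 ≤ m)
    (Ω : Set ((Fin n → ℂ) × ℝ)) (hΩ : IsOpen Ω) (h0 : (0 : (Fin n → ℂ) × ℝ) ∈ Ω)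
    (φ : (Fin n → ℂ) × ℝ → ℝ) (hφ : ContDiffOn ℝ (⊤ : ℕ∞) φ Ω)
    (hφ0 : φ 0 = 0)
    (hφz : ∀ r : Fin n, wz r (fun q => (φ q : ℂ)) 0 = 0)
    (hφzbar : ∀ r : Fin n, wzbar r (fun q => (φ q : ℂ)) 0 = 0)
    (hden : ∀ p ∈ Ω, (1 : ℂ) + Complex.I * dS (fun q => ((q.2 ^ m * φ q : ℝ) : ℂ)) p ≠ 0) :
    ∀ j ℓ : Fin n, ∃ Ω' : Set ((Fin n → ℂ) × ℝ), IsOpen Ω' ∧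
      (0 : (Fin n → ℂ) × ℝ) ∈ Ω' ∧ Ω' ⊆ Ω ∧
      ∃ lam : (Fin n → ℂ) × ℝ → ℂ, ContDiffOn ℝ (⊤ : ℕ∞) lam Ω' ∧
        (∀ p ∈ Ω', Lop m φ j (fun q => (starRingEnd ℂ) (bcoef m φ ℓ q)) p -
            Lbarop m φ ℓ (bcoef m φ j) p = (p.2 : ℂ) ^ m * lam p) ∧
        lam 0 = 2 * Complex.I * wz ℓ (fun q => wzbar j (fun r => (φ r : ℂ)) q) 0 := by
  intro j ℓ
  -- smoothness of the building blocks on Ω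
  have hφC : ContDiffOn ℝ (⊤ : ℕ∞) (fun q => (φ q : ℂ)) Ω := CR10.contDiffOn_ofReal_comp hφ
  have hψ : ContDiffOn ℝ (⊤ : ℕ∞) (CR10.ψf m φ) Ω :=
    CR10.contDiffOn_ofReal_comp (((contDiff_snd.pow m).contDiffOn).mul hφ)
  have hD : ContDiffOn ℝ (⊤ : ℕ∞) (CR10.Dfun m φ) Ω :=
    contDiffOn_const.add (contDiffOn_const.mul (CR10.contDiffOn_dS hΩ hψ))
  have hdenD : ∀ p ∈ Ω, CR10.Dfun m φ p ≠ 0 := fun p hp => hden p hp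
  have hG : ∀ r, ContDiffOn ℝ (⊤ : ℕ∞) (CR10.Gfun m φ r) Ω := fun r =>
    ((contDiffOn_const.mul (CR10.contDiffOn_wzbar hΩ hφC r)).mul (hD.inv hdenD)).congr
      fun p _ => div_eq_mul_inv _ _
  have hH : ∀ r, ContDiffOn ℝ (⊤ : ℕ∞) (CR10.Hfun m φ r) Ω := fun r =>
    ((Complex.conjCLE : ℂ →L[ℝ] ℂ).contDiff.comp_contDiffOn (hG r)).congr
      fun p _ => by simp [CR10.Hfun]
  refine ⟨Ω, hΩ, h0, subset_rfl, CR10.lamF m φ j ℓ, ?_, ?_, ?_⟩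
  · -- smoothness of lam
    have hpow : ContDiffOn ℝ (⊤ : ℕ∞) (fun p : (Fin n → ℂ) × ℝ => ((p.2 : ℝ) : ℂ) ^ m) Ω :=
      (CR10.contDiffOn_ofReal_comp ((contDiff_snd.pow m).contDiffOn)).congr
        fun p _ => by push_cast; ring
    exact ((CR10.contDiffOn_wzbar hΩ (hH ℓ) j).sub (CR10.contDiffOn_wz hΩ (hG j) ℓ)).add
      (hpow.mul (((hG j).mul (CR10.contDiffOn_dS hΩ (hH ℓ))).sub
        ((hH ℓ).mul (CR10.contDiffOn_dS hΩ (hG j)))))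
  · -- the identity on Ω
    intro p hp
    have hGd := CR10.diffAt_of_contDiffOn hΩ (hG j) hp
    have hHd := CR10.diffAt_of_contDiffOn hΩ (hH ℓ) hp
    have hfun1 : (fun q => (starRingEnd ℂ) (bcoef m φ ℓ q))
        = fun q => (q.2 : ℂ) ^ m * CR10.Hfun m φ ℓ q :=
      funext fun q => CR10.conj_bcoef m φ ℓ q
    have hfun2 : bcoef m φ j = fun q => (q.2 : ℂ) ^ m * CR10.Gfun m φ j q :=
      funext fun q => CR10.bcoef_eq m φ j q
    unfold Lop Lbarop
    rw [hfun1, hfun2, CR10.conj_bcoef m φ ℓ p, CR10.wzbar_pow_mul, CR10.wz_pow_mul,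
      CR10.dS_pow_mul m hHd, CR10.dS_pow_mul m hGd]
    unfold CR10.lamF
    ring
  · -- the value at 0
    have h0mem : Ω ∈ nhds (0 : (Fin n → ℂ) × ℝ) := hΩ.mem_nhds h0
    have hφC0 : DifferentiableAt ℝ (fun q => (φ q : ℂ)) 0 :=
      CR10.diffAt_of_contDiffOn hΩ hφC h0
    have hm0 : m ≠ 0 := Nat.one_le_iff_ne_zero.mp hm
    have hψeq : CR10.ψf m φ = fun q => ((q.2 : ℝ) : ℂ) ^ m * (φ q : ℂ) := by
      funext q; unfold CR10.ψf; push_cast; ring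
    have hdSψ : dS (CR10.ψf m φ) 0 = 0 := by
      rw [hψeq, CR10.dS_pow_mul m hφC0]
      simp [hφ0, zero_pow hm0]
    have hD0 : CR10.Dfun m φ 0 = 1 := by
      unfold CR10.Dfun; rw [hdSψ]; ring
    have hG0 : ∀ r, CR10.Gfun m φ r 0 = 0 := by
      intro r; unfold CR10.Gfun; rw [hφzbar r]; simp
    have hGdiff : ∀ r, DifferentiableAt ℝ (CR10.Gfun m φ r) 0 := fun r =>
      CR10.diffAt_of_contDiffOn hΩ (hG r) h0
    have hDdiff : DifferentiableAt ℝ (CR10.Dfun m φ) 0 :=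
      CR10.diffAt_of_contDiffOn hΩ hD h0
    have hGD : ∀ r : Fin n, (fun q => CR10.Gfun m φ r q * CR10.Dfun m φ q) =ᶠ[nhds 0]
        (fun q => -Complex.I * wzbar r (fun q' => (φ q' : ℂ)) q) := by
      intro r
      filter_upwards [h0mem] with p hp
      exact div_mul_cancel₀ _ (hdenD p hp)
    have hwzG : ∀ r i : Fin n, wz i (CR10.Gfun m φ r) 0
        = -Complex.I * wz i (wzbar r (fun q' => (φ q' : ℂ))) 0 := by
      intro r i
      have h1 := CR10.wz_congr i (hGD r)
      rw [CR10.wz_mul i (hGdiff r) hDdiff, CR10.wz_const_mul, hG0 r, hD0] at h1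
      simpa using h1
    -- conj of φC is φC
    have hconjφ : (fun q => (starRingEnd ℂ) ((φ q : ℝ) : ℂ)) = (fun q => (φ q : ℂ)) := by
      funext q; exact Complex.conj_ofReal _
    have ha2 : (fun q => (starRingEnd ℂ) (wzbar ℓ (fun q' => (φ q' : ℂ)) q))
        = wz ℓ (fun q' => (φ q' : ℂ)) := by
      funext q
      have h3 := CR10.wz_conj ℓ (fun q' => (φ q' : ℂ)) q
      rw [← h3]
      congr 1
    have hwzbarH : wzbar j (CR10.Hfun m φ ℓ) 0
        = Complex.I * wzbar j (wz ℓ (fun q' => (φ q' : ℂ))) 0 := by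
      have h1 : wzbar j (CR10.Hfun m φ ℓ) 0 = (starRingEnd ℂ) (wz j (CR10.Gfun m φ ℓ) 0) :=
        CR10.wzbar_conj j (CR10.Gfun m φ ℓ) 0
      have h2 := CR10.wzbar_conj j (wzbar ℓ (fun q' => (φ q' : ℂ))) 0
      rw [ha2] at h2
      rw [h1, hwzG ℓ j, map_mul, ← h2]
      simp
    have hmix := CR10.mixed_symm hΩ h0 hφC j ℓ
    show CR10.lamF m φ j ℓ 0
      = 2 * Complex.I * wz ℓ (wzbar j (fun r => (φ r : ℂ))) 0
    unfold CR10.lamF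
    rw [hwzbarH, hwzG j ℓ, hmix]
    have hz : (((0 : (Fin n → ℂ) × ℝ).2 : ℝ) : ℂ) ^ m = 0 := by
      simp [zero_pow hm0]
    rw [hz]
    ring


end
end
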